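/- Let κ > 0, γ > 0, let D be the open unit ball B(0,1) in ℝ², let 𝐌₀(r) := Z₀⁻¹((1−|r|²)/(1+γ|r|²))^{κ/(2(1+γ))} with Z₀ := ∫_D ((1−|s|²)/(1+γ|s|²))^{κ/(2(1+γ))} ds, and let 𝒜(r) := 3|r|² I − 2 r⊗r. Then for every twice continuously differentiable function f : D → ℝ and every r ∈ D: div(κ (r/(1−|r|²)) f(r) + (I + γ𝒜(r))∇f(r)) = div(𝐌₀(r)(I + γ𝒜(r))∇(f/𝐌₀)(r)); i.e., the corrected Fokker–Planck operator can be written in divergence form with respect to the weight 𝐌₀. -/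

import Mathlib

/-!
The two vector fields already agree pointwise on `D`, so their divergences agree. The weight
`w(r) = ((1 - |r|²)/(1 + γ|r|²))^α` has `∇w = -2α(1+γ) w r / ((1 - |r|²)(1 + γ|r|²))`, and `r` is an
eigenvector of `𝒜(r)` with eigenvalue `|r|²`. Hence, for `α = κ/(2(1+γ))`,
`𝐌₀ (I + γ𝒜) ∇(f/𝐌₀) = (I + γ𝒜)(∇f - f ∇𝐌₀/𝐌₀) = (I + γ𝒜)∇f + κ f r/(1 - |r|²)`.
This needs `Z₀ ≠ 0`, which holds because `w` is positive on `D` and continuous on its closure.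
-/

open MeasureTheory Real
open scoped RealInnerProductSpace

noncomputable section

abbrev E2 : Type := EuclideanSpace ℝ (Fin 2)

/-- The divergence of a vector field `F : ℝ² → ℝ²` at a point. -/
def diverg (F : E2 → E2) (r : E2) : ℝ :=
  ∑ i : Fin 2, fderiv ℝ (fun y => F y i) r (EuclideanSpace.single i (1 : ℝ))

/-- The action of the matrix `𝒜(r) = 3|r|² I - 2 r⊗r` on a vector. -/
def Acal (r v : E2) : E2 := (3 * ‖r‖ ^ 2) • v - (2 * ⟪r, v⟫) • r

open Filter Topology InnerProductSpace

section Gradient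

variable {F : Type*} [NormedAddCommGroup F] [InnerProductSpace ℝ F] [CompleteSpace F]
  {f g : F → ℝ} {a b x : F}

lemma HasGradientAt.const_mul (c : ℝ) (hf : HasGradientAt f a x) :
    HasGradientAt (fun y => c * f y) (c • a) x := by
  rw [hasGradientAt_iff_hasFDerivAt, map_smul]
  exact hf.hasFDerivAt.const_mul c

lemma HasGradientAt.div (hf : HasGradientAt f a x) (hg : HasGradientAt g b x) (hx : g x ≠ 0) :
    HasGradientAt (fun y => f y / g y) ((g x)⁻¹ • a - (f x / g x ^ 2) • b) x := by
  have h : HasFDerivAt (fun y => f y * (g y)⁻¹) _ x :=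
    hf.hasFDerivAt.mul ((hasDerivAt_inv hx).comp_hasFDerivAt x hg.hasFDerivAt)
  simp only [div_eq_mul_inv, hasGradientAt_iff_hasFDerivAt]
  refine h.congr_fderiv ?_
  ext v
  simp
  ring

lemma HasDerivAt.hasGradientAt_comp_norm_sq {φ : ℝ → ℝ} {φ' : ℝ}
    (h : HasDerivAt φ φ' (‖x‖ ^ 2)) :
    HasGradientAt (fun y => φ (‖y‖ ^ 2)) ((2 * φ') • x) x := by
  rw [hasGradientAt_iff_hasFDerivAt]
  refine (h.comp_hasFDerivAt x (hasStrictFDerivAt_norm_sq x).hasFDerivAt).congr_fderiv ?_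
  ext v
  simp
  ring

end Gradient

lemma diverg_congr_of_eventuallyEq {V W : E2 → E2} {r : E2} (h : V =ᶠ[𝓝 r] W) :
    diverg V r = diverg W r := by
  unfold diverg
  congr! 2 with i
  exact (h.fun_comp (· i)).fderiv_eq

lemma Acal_add (r v w : E2) : Acal r (v + w) = Acal r v + Acal r w := by
  simp only [Acal, inner_add_right]
  module

lemma Acal_smul (r v : E2) (c : ℝ) : Acal r (c • v) = c • Acal r v := by
  simp only [Acal, real_inner_smul_right]
  module

lemma Acal_self (r : E2) : Acal r r = ‖r‖ ^ 2 • r := by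
  simp only [Acal, real_inner_self_eq_norm_sq]
  module

lemma one_add_mul_pos {γ t : ℝ} (hγ : -1 < γ) (h0 : 0 ≤ t) (h1 : t ≤ 1) :
    0 < 1 + γ * t := by
  rcases le_or_gt 0 γ with hγ0 | hγ0
  · nlinarith [mul_nonneg hγ0 h0]
  · nlinarith [mul_nonneg_of_nonpos_of_nonpos hγ0.le (sub_nonpos.2 h1)]

lemma hasDerivAt_ratio_rpow {γ α t : ℝ} (ht : t < 1) (hγt : 0 < 1 + γ * t) :
    HasDerivAt (fun s => ((1 - s) / (1 + γ * s)) ^ α)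
      (-(α * (1 + γ)) / ((1 - t) * (1 + γ * t)) * ((1 - t) / (1 + γ * t)) ^ α) t := by
  have hpos : 0 < (1 - t) / (1 + γ * t) := div_pos (by linarith) hγt
  have hq : HasDerivAt (fun s => (1 - s) / (1 + γ * s)) (-(1 + γ) / (1 + γ * t) ^ 2) t := by
    refine (((hasDerivAt_id t).const_sub 1).div
      (((hasDerivAt_id t).const_mul γ).const_add 1) hγt.ne').congr_deriv ?_
    simp only [id]
    ring
  convert hq.rpow_const (p := α) (Or.inl hpos.ne') using 1
  rw [rpow_sub hpos, rpow_one]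
  field_simp

section Weight

variable {F : Type*} [NormedAddCommGroup F] {γ α : ℝ}

/-- `Z₀ 𝐌₀` for the exponent `α = κ / (2 (1 + γ))`. -/
def equilibriumWeight (γ α : ℝ) (r : F) : ℝ := ((1 - ‖r‖ ^ 2) / (1 + γ * ‖r‖ ^ 2)) ^ α

lemma equilibriumWeight_pos (hγ : -1 < γ) {r : F} (hr : ‖r‖ < 1) :
    0 < equilibriumWeight γ α r := by
  have h1 : ‖r‖ ^ 2 < 1 := pow_lt_one₀ (norm_nonneg r) hr two_ne_zero
  have h0 := one_add_mul_pos hγ (sq_nonneg ‖r‖) h1.le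
  exact rpow_pos_of_pos (div_pos (by linarith) h0) α

lemma continuousOn_equilibriumWeight (hγ : -1 < γ) (hα : 0 ≤ α) :
    ContinuousOn (equilibriumWeight γ α) (Metric.closedBall (0 : F) 1) := by
  refine ContinuousOn.rpow_const (ContinuousOn.div (by fun_prop) (by fun_prop) fun s hs => ?_)
    fun _ _ => Or.inr hα
  exact (one_add_mul_pos hγ (sq_nonneg ‖s‖)
    (pow_le_one₀ (norm_nonneg s) (by simpa using hs))).ne'

lemma setIntegral_equilibriumWeight_pos [MeasurableSpace F] [BorelSpace F] [ProperSpace F]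
    (μ : Measure F) [IsFiniteMeasureOnCompacts μ] [μ.IsOpenPosMeasure]
    (hγ : -1 < γ) (hα : 0 ≤ α) :
    0 < ∫ s in Metric.ball (0 : F) 1, equilibriumWeight γ α s ∂μ := by
  have hpos : ∀ s ∈ Metric.ball (0 : F) 1, 0 < equilibriumWeight γ α s := fun s hs =>
    equilibriumWeight_pos hγ (by simpa using hs)
  have hint : IntegrableOn (equilibriumWeight γ α) (Metric.ball (0 : F) 1) μ :=
    ((continuousOn_equilibriumWeight hγ hα).integrableOn_compact
      (isCompact_closedBall 0 1)).mono_set Metric.ball_subset_closedBall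
  rw [setIntegral_pos_iff_support_of_nonneg_ae
    ((ae_restrict_iff' measurableSet_ball).2 (.of_forall fun s hs => (hpos s hs).le)) hint]
  refine (Metric.measure_ball_pos μ 0 one_pos).trans_le (measure_mono fun s hs => ?_)
  exact ⟨(hpos s hs).ne', hs⟩

end Weight

lemma hasGradientAt_equilibriumWeight {F : Type*} [NormedAddCommGroup F] [InnerProductSpace ℝ F]
    [CompleteSpace F] {γ α : ℝ} (hγ : -1 < γ) {r : F} (hr : ‖r‖ < 1) :
    HasGradientAt (equilibriumWeight γ α)
      ((-(2 * α * (1 + γ)) / ((1 - ‖r‖ ^ 2) * (1 + γ * ‖r‖ ^ 2)) * equilibriumWeight γ α r) • r)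
      r := by
  have h1 : ‖r‖ ^ 2 < 1 := pow_lt_one₀ (norm_nonneg r) hr two_ne_zero
  have h : HasGradientAt (equilibriumWeight γ α) _ r := (hasDerivAt_ratio_rpow (α := α) h1
    (one_add_mul_pos hγ (sq_nonneg ‖r‖) h1.le)).hasGradientAt_comp_norm_sq
  convert h using 2
  rw [equilibriumWeight]
  ring

lemma smul_gradient_div_add_Acal (γ : ℝ) {f M : E2 → ℝ} {y : E2} {β : ℝ}
    (hf : DifferentiableAt ℝ f y) (hM : HasGradientAt M ((-(β * M y)) • y) y) (hMy : M y ≠ 0) :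
    M y • (gradient (fun z => f z / M z) y + γ • Acal y (gradient (fun z => f z / M z) y))
      = (β * (1 + γ * ‖y‖ ^ 2) * f y) • y + (gradient f y + γ • Acal y (gradient f y)) := by
  have hgrad : gradient (fun z => f z / M z) y = (M y)⁻¹ • (gradient f y + (β * f y) • y) := by
    rw [(hf.hasGradientAt.div hM hMy).gradient]
    match_scalars <;> field_simp
  rw [hgrad, Acal_smul, Acal_add, Acal_smul, Acal_self]
  match_scalars <;> field_simp

/-- Divergence form of the corrected Fokker–Planck operator: for every `C²` function `f`
on the open unit ball `D ⊂ ℝ²` and every `r ∈ D`,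
`div(κ(r/(1-|r|²))f + (I+γ𝒜)∇f) = div(𝐌₀ (I+γ𝒜) ∇(f/𝐌₀))`. -/
theorem fokker_planck_divergence_form (κ γ : ℝ) (hκ : 0 < κ) (hγ : 0 < γ)
    (Z₀ : ℝ) (hZ₀ : Z₀ = ∫ s in Metric.ball (0 : E2) 1,
      ((1 - ‖s‖ ^ 2) / (1 + γ * ‖s‖ ^ 2)) ^ (κ / (2 * (1 + γ))))
    (M₀ : E2 → ℝ) (hM₀ : ∀ r, M₀ r = Z₀⁻¹ *
      ((1 - ‖r‖ ^ 2) / (1 + γ * ‖r‖ ^ 2)) ^ (κ / (2 * (1 + γ))))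
    (f : E2 → ℝ) (hf : ContDiffOn ℝ 2 f (Metric.ball (0 : E2) 1)) :
    ∀ r ∈ Metric.ball (0 : E2) 1,
      diverg (fun y => (κ / (1 - ‖y‖ ^ 2) * f y) • y
          + (gradient f y + γ • Acal y (gradient f y))) r
        = diverg (fun y => M₀ y •
            (gradient (fun z => f z / M₀ z) y
              + γ • Acal y (gradient (fun z => f z / M₀ z) y))) r := by
  intro r hr
  set α := κ / (2 * (1 + γ)) with hα
  have hγ' : (-1 : ℝ) < γ := by linarith
  have hZ : 0 < Z₀ := hZ₀ ▸ setIntegral_equilibriumWeight_pos volume hγ' (by positivity)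
  have hM₀' : M₀ = fun y => Z₀⁻¹ * equilibriumWeight γ α y := funext hM₀
  refine diverg_congr_of_eventuallyEq ?_
  filter_upwards [Metric.isOpen_ball.mem_nhds hr] with y hy
  have hy1 : ‖y‖ < 1 := by simpa using hy
  have hMy : 0 < M₀ y := hM₀' ▸ mul_pos (inv_pos.2 hZ) (equilibriumWeight_pos hγ' hy1)
  have hM : HasGradientAt M₀ ((-(κ / ((1 - ‖y‖ ^ 2) * (1 + γ * ‖y‖ ^ 2)) * M₀ y)) • y) y := by
    rw [hM₀']
    convert (hasGradientAt_equilibriumWeight hγ' hy1).const_mul Z₀⁻¹ using 1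
    rw [smul_smul, hα]
    field_simp
  rw [smul_gradient_div_add_Acal γ ((hf.differentiableOn two_ne_zero).differentiableAt
    (Metric.isOpen_ball.mem_nhds hy)) hM hMy.ne']
  have hy2 : ‖y‖ ^ 2 < 1 := pow_lt_one₀ (norm_nonneg y) hy1 two_ne_zero
  have hden : 0 < 1 + γ * ‖y‖ ^ 2 := one_add_mul_pos hγ' (sq_nonneg ‖y‖) hy2.le
  congr 2
  field_simp
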